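/- arXiv:2005.01023 — 2 statements merged into one kernel-verified Lean document; each statement's English description precedes it below -/
import Mathlib

section
/- Let a ∈ [0, ∞) and q ∈ [1, ∞) with a < q. Then there exists a ℂ-linear subspace F of the Banach space ℓ^q such that F is dense in ℓ^q and every nonzero element f of F fails to belong to ⋂_{p>a} ℓ^p; that is, for every nonzero f ∈ F there exists a real p with a < p < ∞ and ∑_{n} |f(n)|^p = ∞. -/
/-!
Fix `g ∈ ℓ^q` with `∑ ‖g k‖^r = ∞`, e.g. `g k = k^(-1/r)` for `a < r < q`. Split `ℕ` into infinitely
many infinite columns `{pair i k | k}` and let the `i`-th generator, `(n, m) = unpair i`, be the unit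
vector `e_n` plus `2^(-m)` times a copy of `g` in column `i`. Letting `m → ∞` recovers every `e_n`,
so the span is dense. In a nonzero finite combination, column `i` of a generator `i` with nonzero
coefficient is, away from finitely many `k`, a nonzero multiple of `g`: the unit vectors live on
finitely many coordinates and the other generators vanish on that column.
-/

open Filter Topology Function Submodule
open scoped ENNReal

theorem Nat.pair_right_injective (a : ℕ) : Injective (Nat.pair a) :=
  fun _ _ h => (Nat.pair_eq_pair.mp h).2

section ExtendZero

variable {α β E : Type*} [NormedAddCommGroup E] {e : β → α}

theorem norm_rpow_extend_zero (g : β → E) {s : ℝ} (hs : s ≠ 0) :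
    (fun a => ‖extend e g 0 a‖ ^ s) = extend e (fun b => ‖g b‖ ^ s) 0 := by
  funext a
  rw [apply_extend (fun x : E => ‖x‖ ^ s)]
  congr 1
  funext _
  simp [Real.zero_rpow hs]

theorem Memℓp.extend_zero {p : ℝ≥0∞} (hp : 0 < p.toReal) (he : Injective e) {g : β → E}
    (hg : Memℓp g p) : Memℓp (extend e g 0) p := by
  rw [memℓp_gen_iff hp, norm_rpow_extend_zero g hp.ne', summable_extend_zero he]
  exact (memℓp_gen_iff hp).mp hg

namespace lp

variable {p : ℝ≥0∞}

noncomputable def extendZero (hp : 0 < p.toReal) (he : Injective e) (f : lp (fun _ : β => E) p) :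
    lp (fun _ : α => E) p :=
  ⟨extend e f 0, (lp.memℓp f).extend_zero hp he⟩

theorem norm_extendZero (hp : 0 < p.toReal) (he : Injective e) (f : lp (fun _ : β => E) p) :
    ‖extendZero hp he f‖ = ‖f‖ := by
  rw [norm_eq_tsum_rpow hp, norm_eq_tsum_rpow hp]
  congr 1
  exact (congrArg tsum (norm_rpow_extend_zero f hp.ne')).trans (tsum_extend_zero he _)

end lp

end ExtendZero

namespace lp

def coeFnLinearMap (𝕜 : Type*) {α : Type*} (E : α → Type*) (p : ℝ≥0∞) [NormedRing 𝕜]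
    [∀ i, NormedAddCommGroup (E i)] [∀ i, Module 𝕜 (E i)] [∀ i, IsBoundedSMul 𝕜 (E i)] :
    lp E p →ₗ[𝕜] ∀ i, E i where
  toFun f := f
  map_add' := coeFn_add
  map_smul' := coeFn_smul

theorem dense_of_single_one_mem_closure {𝕜 ι : Type*} [NormedRing 𝕜] [DecidableEq ι]
    {p : ℝ≥0∞} [Fact (1 ≤ p)] (hp : p ≠ ⊤) {F : Submodule 𝕜 (lp (fun _ : ι => 𝕜) p)}
    (h : ∀ i, lp.single p i (1 : 𝕜) ∈ closure (F : Set (lp (fun _ : ι => 𝕜) p))) :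
    Dense (F : Set (lp (fun _ : ι => 𝕜) p)) := by
  intro f
  rw [← F.topologicalClosure_coe] at h ⊢
  refine F.isClosed_topologicalClosure.mem_of_tendsto (lp.hasSum_single hp f)
    (Eventually.of_forall fun s => sum_mem fun i _ => ?_)
  simpa [← lp.single_smul] using F.topologicalClosure.smul_mem (f i) (h i)

end lp

section PerturbedSingle

variable {𝕜 : Type*} [RCLike 𝕜] (g : ℕ → 𝕜)

/-- `e_n + 2^(-m) • g` with `g` placed in column `i` (the coordinates `pair i k`), where
`(n, m) = unpair i`. -/
noncomputable def perturbedSingle (i : ℕ) : ℕ → 𝕜 :=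
  Pi.single (M := fun _ => 𝕜) (Nat.unpair i).1 1 +
    (2⁻¹ : 𝕜) ^ (Nat.unpair i).2 • extend (Nat.pair i) g 0

theorem eventually_perturbedSingle_apply_pair (i i₀ : ℕ) :
    ∀ᶠ k in atTop, perturbedSingle g i (Nat.pair i₀ k) =
      if i = i₀ then (2⁻¹ : 𝕜) ^ (Nat.unpair i₀).2 * g k else 0 := by
  filter_upwards [eventually_gt_atTop (Nat.unpair i).1] with k hk
  have hsingle : Pi.single (M := fun _ => 𝕜) (Nat.unpair i).1 1 (Nat.pair i₀ k) = 0 :=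
    Pi.single_eq_of_ne (by have := Nat.right_le_pair i₀ k; omega) _
  simp only [perturbedSingle, Pi.add_apply, Pi.smul_apply, hsingle, zero_add, smul_eq_mul]
  split_ifs with h
  · subst h
    rw [(Nat.pair_right_injective i).extend_apply]
  · rw [extend_apply', Pi.zero_apply, mul_zero]
    rintro ⟨k', hk'⟩
    exact h (Nat.pair_eq_pair.mp hk').1

theorem eventually_finsuppSum_perturbedSingle_apply_pair (c : ℕ →₀ 𝕜) (i₀ : ℕ) :
    ∀ᶠ k in atTop, (c.sum fun i a => a • perturbedSingle g i) (Nat.pair i₀ k) =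
      c i₀ * (2⁻¹ : 𝕜) ^ (Nat.unpair i₀).2 * g k := by
  filter_upwards [(eventually_all_finset c.support).2
    fun i _ => eventually_perturbedSingle_apply_pair g i i₀] with k hk
  rw [Finsupp.sum, Finset.sum_apply, Finset.sum_congr rfl fun i hi => by
    rw [Pi.smul_apply, hk i hi, smul_eq_mul, mul_ite, mul_zero], Finset.sum_ite_eq']
  split_ifs with h
  · ring
  · simp [Finsupp.notMem_support_iff.mp h]

variable {g}

theorem not_summable_of_eventually_column {s : ℝ} (hg : ¬Summable fun k => ‖g k‖ ^ s)
    {f : ℕ → 𝕜} {i₀ : ℕ} {c : 𝕜} (hc : c ≠ 0) (hf : ∀ᶠ k in atTop, f (Nat.pair i₀ k) = c * g k) :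
    ¬Summable fun n => ‖f n‖ ^ s := by
  intro hsum
  have hcol : Summable fun k => ‖c‖ ^ s * ‖g k‖ ^ s :=
    (hsum.comp_injective (Nat.pair_right_injective i₀)).congr_atTop <| hf.mono fun k hk => by
      simp [hk, Real.mul_rpow]
  exact hg ((summable_mul_left_iff (by positivity)).mp hcol)

theorem not_summable_of_mem_span_perturbedSingle {s : ℝ} (hg : ¬Summable fun k => ‖g k‖ ^ s)
    {f : ℕ → 𝕜} (hf : f ∈ span 𝕜 (Set.range (perturbedSingle g))) (hf₀ : f ≠ 0) :
    ¬Summable fun n => ‖f n‖ ^ s := by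
  obtain ⟨c, rfl⟩ := Finsupp.mem_span_range_iff_exists_finsupp.mp hf
  obtain ⟨i₀, hi₀⟩ : c.support.Nonempty :=
    Finsupp.support_nonempty_iff.mpr (by rintro rfl; simp at hf₀)
  exact not_summable_of_eventually_column hg
    (mul_ne_zero (Finsupp.mem_support_iff.mp hi₀) (by simp))
    (eventually_finsuppSum_perturbedSingle_apply_pair g c i₀)

end PerturbedSingle

section Lp

variable {𝕜 : Type*} [RCLike 𝕜] {p : ℝ≥0∞} [Fact (1 ≤ p)] {g : ℕ → 𝕜}

theorem ENNReal.toReal_pos_of_one_le (hp : p ≠ ⊤) : 0 < p.toReal :=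
  ENNReal.toReal_pos (zero_lt_one.trans_le Fact.out).ne' hp

noncomputable def perturbedSingleLp (hp : p ≠ ⊤) (hg : Memℓp g p) (i : ℕ) :
    lp (fun _ : ℕ => 𝕜) p :=
  lp.single p (Nat.unpair i).1 1 + (2⁻¹ : 𝕜) ^ (Nat.unpair i).2 •
    lp.extendZero (ENNReal.toReal_pos_of_one_le hp) (Nat.pair_right_injective i) ⟨g, hg⟩

theorem coe_perturbedSingleLp (hp : p ≠ ⊤) (hg : Memℓp g p) (i : ℕ) :
    ⇑(perturbedSingleLp hp hg i) = perturbedSingle g i :=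
  rfl

theorem tendsto_perturbedSingleLp_pair (hp : p ≠ ⊤) (hg : Memℓp g p) (n : ℕ) :
    Tendsto (fun m => perturbedSingleLp hp hg (Nat.pair n m)) atTop
      (𝓝 (lp.single p n (1 : 𝕜))) := by
  have hsmall : Tendsto (fun m => (2⁻¹ : 𝕜) ^ m • lp.extendZero (ENNReal.toReal_pos_of_one_le hp)
      (Nat.pair_right_injective (Nat.pair n m)) ⟨g, hg⟩) atTop (𝓝 0) := by
    rw [tendsto_zero_iff_norm_tendsto_zero]
    simp only [norm_smul, norm_pow, lp.norm_extendZero, norm_inv, RCLike.norm_ofNat]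
    simpa using (tendsto_pow_atTop_nhds_zero_of_lt_one (by norm_num : (0 : ℝ) ≤ 2⁻¹)
      (by norm_num)).mul_const ‖(⟨g, hg⟩ : lp (fun _ : ℕ => 𝕜) p)‖
  simpa [perturbedSingleLp, Nat.unpair_pair] using tendsto_const_nhds.add hsmall

theorem exists_dense_submodule_forall_ne_zero_not_summable (hp : p ≠ ⊤) (hg : Memℓp g p)
    {s : ℝ} (hgs : ¬Summable fun k => ‖g k‖ ^ s) :
    ∃ F : Submodule 𝕜 (lp (fun _ : ℕ => 𝕜) p), Dense (F : Set (lp (fun _ : ℕ => 𝕜) p)) ∧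
      ∀ f ∈ F, f ≠ 0 → ¬Summable fun n => ‖(f : ℕ → 𝕜) n‖ ^ s := by
  refine ⟨(span 𝕜 (Set.range (perturbedSingle g))).comap (lp.coeFnLinearMap 𝕜 _ p),
    lp.dense_of_single_one_mem_closure hp fun n => ?_,
    fun f hf hf₀ => not_summable_of_mem_span_perturbedSingle hgs hf fun h => hf₀ (lp.ext h)⟩
  exact mem_closure_of_tendsto (tendsto_perturbedSingleLp_pair hp hg n)
    (Eventually.of_forall fun m => subset_span ⟨_, (coe_perturbedSingleLp hp hg _).symm⟩)

end Lp

theorem summable_norm_ofReal_natCast_rpow_neg_inv_iff {𝕜 : Type*} [RCLike 𝕜] {r s : ℝ}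
    (hr : 0 < r) : (Summable fun k : ℕ => ‖(((k : ℝ) ^ (-r⁻¹) : ℝ) : 𝕜)‖ ^ s) ↔ r < s := by
  have hterm (k : ℕ) : ‖(((k : ℝ) ^ (-r⁻¹) : ℝ) : 𝕜)‖ ^ s = (k : ℝ) ^ (-(s / r)) := by
    rw [RCLike.norm_ofReal, abs_of_nonneg (by positivity), ← Real.rpow_mul (Nat.cast_nonneg k)]
    ring_nf
  simp_rw [hterm, Real.summable_nat_rpow, neg_lt_neg_iff, one_lt_div hr]

theorem algebraic_genericity_ellQ_interP_general (a q : ℝ) (ha : 0 ≤ a) (haq : a < q)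
    [Fact (1 ≤ ENNReal.ofReal q)] :
    ∃ F : Submodule ℂ (lp (fun _ : ℕ => ℂ) (ENNReal.ofReal q)),
      Dense (F : Set (lp (fun _ : ℕ => ℂ) (ENNReal.ofReal q))) ∧
      ∀ f ∈ F, f ≠ 0 →
        ∃ p : ℝ, a < p ∧ ¬ Summable fun n : ℕ => ‖(f : ∀ _ : ℕ, ℂ) n‖ ^ p := by
  obtain ⟨r, har, hrq⟩ := exists_between haq
  have hr : 0 < r := ha.trans_lt har
  have hg : Memℓp (fun k : ℕ => (((k : ℝ) ^ (-r⁻¹) : ℝ) : ℂ)) (ENNReal.ofReal q) := by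
    refine memℓp_gen ?_
    rw [ENNReal.toReal_ofReal (hr.trans hrq).le]
    exact (summable_norm_ofReal_natCast_rpow_neg_inv_iff hr).mpr hrq
  obtain ⟨F, hF, hFr⟩ := exists_dense_submodule_forall_ne_zero_not_summable
    ENNReal.ofReal_ne_top hg (s := r) ((summable_norm_ofReal_natCast_rpow_neg_inv_iff hr).not.mpr
      (lt_irrefl r))
  exact ⟨F, hF, fun f hf hf₀ => ⟨r, har, hFr f hf hf₀⟩⟩

/-- Let `a ∈ [0, ∞)` and `q ∈ [1, ∞)` with `a < q`. There is a dense
`ℂ`-linear subspace `F` of the Banach space `ℓ^q` every nonzero element of which fails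
to belong to `⋂_{p > a} ℓ^p`. -/
theorem algebraic_genericity_ellQ_interP (a q : ℝ) (ha : 0 ≤ a) (haq : a < q)
    (hq : 1 ≤ q) [Fact (1 ≤ ENNReal.ofReal q)] :
    ∃ F : Submodule ℂ (lp (fun _ : ℕ => ℂ) (ENNReal.ofReal q)),
      Dense (F : Set (lp (fun _ : ℕ => ℂ) (ENNReal.ofReal q))) ∧
      ∀ f ∈ F, f ≠ 0 →
        ∃ p : ℝ, a < p ∧ ¬ Summable fun n : ℕ => ‖(f : ∀ _ : ℕ, ℂ) n‖ ^ p :=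
  algebraic_genericity_ellQ_interP_general a q ha haq
end

section
/- Let 0 < p ≤ q < ∞ and let a < b be real numbers. Then there exists a sequence of functions g_n : ℂ → ℂ (n ∈ ℕ), each holomorphic on the open unit disc D = {z ∈ ℂ : |z| < 1}, such that for every N ∈ ℕ and all complex scalars λ_0, …, λ_N with λ_N ≠ 0, the linear combination L = λ_0 g_0 + ⋯ + λ_N g_N satisfies: (1) for every real β with 0 < β < p, sup_{0<r<1} ∫_0^{2π} |L(r e^{iθ})|^β dθ < ∞, and (2) sup_{0<r<1} ∫_a^b |L(r e^{iθ})|^q dθ = ∞. In particular the ℂ-linear span of {g_n} is an infinite-dimensional vector space F with F \ {0} ⊆ (⋂_{β<p} H^β) \ H^q_{[a,b]}(D). -/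
/-!
Take distinct points `θₙ ∈ (a, b)` and `gₙ z = (1 - e^{-iθₙ} z)^{-1/p}`, so that
`|gₙ z| = |z - e^{iθₙ}|^{-1/p}`.

Since `|r e^{iθ} - e^{iθ₀}| ≥ |sin (θ - θ₀)|` and `|sin|^{-α}` is integrable for `α < 1`, the
`β`-means of any combination `L = ∑ λₙ gₙ` are bounded uniformly in `r` as soon as `β < p`.

Near `ζ = e^{iθ_N}` the terms of index `< N` are continuous, hence bounded, while `|λ_N g_N|`
blows up; so `|L|^q ≥ c |z - ζ|^{-q/p} ≥ c / |z - ζ|`, and on the arc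
`θ ∈ (θ_N + (1 - r), θ_N + ε]` this is at least `c / (2 (θ - θ_N))`. Integrating gives
`(c/2) log (ε / (1 - r)) → ∞` as `r → 1`.
-/

open scoped ENNReal Real
open Complex MeasureTheory Set

/-- `∫_a^b |f(r e^{iθ})|^e dθ`, as a Lebesgue integral with values in `[0, ∞]`. -/
noncomputable def hardyArcIntegral (f : ℂ → ℂ) (e a b r : ℝ) : ℝ≥0∞ :=
  ∫⁻ θ in Ioc a b, ENNReal.ofReal (‖f ((r : ℂ) * Complex.exp (θ * Complex.I))‖ ^ e)

open Filter Topology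

noncomputable def boundarySingularity (s θ₀ : ℝ) (z : ℂ) : ℂ :=
  (1 - cexp (-(θ₀ * I)) * z) ^ ((-s : ℝ) : ℂ)

lemma norm_boundarySingularity (s θ₀ : ℝ) (z : ℂ) :
    ‖boundarySingularity s θ₀ z‖ = ‖z - cexp (θ₀ * I)‖ ^ (-s) := by
  have h : 1 - cexp (-(θ₀ * I)) * z = cexp (-(θ₀ * I)) * (cexp (θ₀ * I) - z) := by
    rw [mul_sub, ← Complex.exp_add, neg_add_cancel, Complex.exp_zero]
  rw [boundarySingularity, norm_cpow_real, h, norm_mul, norm_sub_rev]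
  simp [Complex.norm_exp]

lemma one_sub_mem_slitPlane {w : ℂ} (hw : ‖w‖ ≤ 1) (hw1 : w ≠ 1) : 1 - w ∈ slitPlane := by
  rw [mem_slitPlane_iff]
  by_contra! h
  obtain ⟨hre, him⟩ := h
  rw [sub_re, one_re, sub_nonpos] at hre
  rw [sub_im, one_im, zero_sub, neg_eq_zero] at him
  exact hw1 (Complex.ext (le_antisymm ((re_le_norm w).trans hw) hre) him)

lemma differentiableAt_boundarySingularity (s θ₀ : ℝ) {z : ℂ} (hz : ‖z‖ ≤ 1)
    (hne : z ≠ cexp (θ₀ * I)) : DifferentiableAt ℂ (boundarySingularity s θ₀) z := by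
  have hw : ‖cexp (-(θ₀ * I)) * z‖ ≤ 1 := by simpa [Complex.norm_exp] using hz
  have hw1 : cexp (-(θ₀ * I)) * z ≠ 1 := by
    rw [Complex.exp_neg, Ne, inv_mul_eq_one₀ (Complex.exp_ne_zero _)]
    exact hne.symm
  exact ((differentiableAt_const _).sub (differentiableAt_id.const_mul _)).cpow_const
    (one_sub_mem_slitPlane hw hw1)

lemma differentiableOn_boundarySingularity (s θ₀ : ℝ) :
    DifferentiableOn ℂ (boundarySingularity s θ₀) (Metric.ball 0 1) := by
  intro z hz
  rw [mem_ball_zero_iff] at hz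
  refine (differentiableAt_boundarySingularity s θ₀ hz.le ?_).differentiableWithinAt
  rintro rfl
  simp [norm_exp_ofReal_mul_I] at hz

-- `|sin (θ - θ₀)|` is the distance from `e^{iθ₀}` to the real line through `e^{iθ}`.
lemma abs_sin_sub_le_norm_mul_exp_sub_exp (r θ θ₀ : ℝ) :
    |Real.sin (θ - θ₀)| ≤ ‖(r : ℂ) * cexp (θ * I) - cexp (θ₀ * I)‖ := by
  have h : (r : ℂ) * cexp (θ * I) - cexp (θ₀ * I)
      = cexp (θ * I) * (r - cexp ((θ₀ - θ : ℝ) * I)) := by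
    rw [mul_sub, ofReal_sub, sub_mul, Complex.exp_sub, mul_div_cancel₀ _ (Complex.exp_ne_zero _),
      mul_comm]
  rw [h, norm_mul, norm_exp_ofReal_mul_I, one_mul]
  convert abs_im_le_norm _ using 2
  rw [sub_im, ofReal_im, exp_ofReal_mul_I_im, zero_sub, ← Real.sin_neg, neg_sub]

lemma norm_mul_exp_sub_exp_le {r : ℝ} (hr : r ≤ 1) (θ θ₀ : ℝ) :
    ‖(r : ℂ) * cexp (θ * I) - cexp (θ₀ * I)‖ ≤ (1 - r) + |θ - θ₀| := by
  have h1 : ‖(r : ℂ) * cexp (θ * I) - cexp (θ * I)‖ = 1 - r := by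
    rw [← sub_one_mul, norm_mul, norm_exp_ofReal_mul_I, mul_one, ← ofReal_one, ← ofReal_sub,
      norm_real, Real.norm_of_nonpos (by linarith), neg_sub]
  have h2 : ‖cexp (θ * I) - cexp (θ₀ * I)‖ ≤ |θ - θ₀| := by
    have : cexp (θ * I) - cexp (θ₀ * I) = cexp (θ₀ * I) * (cexp (I * (θ - θ₀ : ℝ)) - 1) := by
      rw [mul_sub, mul_one, ← Complex.exp_add]; push_cast; ring_nf
    rw [this, norm_mul, norm_exp_ofReal_mul_I, one_mul]
    exact Real.norm_exp_I_mul_ofReal_sub_one_le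
  calc _ ≤ ‖(r : ℂ) * cexp (θ * I) - cexp (θ * I)‖ + ‖cexp (θ * I) - cexp (θ₀ * I)‖ :=
        norm_sub_le_norm_sub_add_norm_sub _ _ _
    _ ≤ _ := by rw [h1]; gcongr

lemma intervalIntegrable_abs_sin_rpow_neg {α : ℝ} (hα0 : 0 ≤ α) (hα1 : α < 1) (a b : ℝ) :
    IntervalIntegrable (fun u => |Real.sin u| ^ (-α)) volume a b := by
  have hperiodic : Function.Periodic (fun u => |Real.sin u| ^ (-α)) π := fun u => by
    simp only [Real.sin_add_pi, abs_neg]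
  have hleft : IntervalIntegrable (fun u => |Real.sin u| ^ (-α)) volume 0 (π / 2) := by
    have hmeas : Measurable fun u => |Real.sin u| ^ (-α) := by fun_prop
    refine ((intervalIntegral.intervalIntegrable_rpow' (r := -α) (by linarith)).const_mul
      ((2 / π) ^ (-α))).mono_fun hmeas.aestronglyMeasurable ?_
    rw [uIoc_of_le (by positivity)]
    refine (ae_restrict_iff' measurableSet_Ioc).2 (ae_of_all _ fun u hu => ?_)
    have hsin : 2 / π * u ≤ |Real.sin u| := (Real.mul_le_sin hu.1.le hu.2).trans (le_abs_self _)
    dsimp only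
    rw [Real.norm_of_nonneg (by positivity), Real.norm_of_nonneg (by positivity [hu.1]),
      ← Real.mul_rpow (by positivity) hu.1.le]
    exact Real.rpow_le_rpow_of_nonpos (by positivity [hu.1]) hsin (by linarith)
  have hright : IntervalIntegrable (fun u => |Real.sin u| ^ (-α)) volume (π / 2) π := by
    have h := (hleft.comp_sub_left π).symm
    simp only [Real.sin_pi_sub, sub_zero] at h
    convert h using 2
    ring
  exact hperiodic.intervalIntegrable Real.pi_ne_zero (t := 0)
    (by simpa using hleft.trans hright) a b

-- At the zeros of `sin`, `|sin|^(-α)` takes the junk value `0`, so the comparison holds only a.e.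
lemma lintegral_rpow_neg_norm_mul_exp_sub_exp_le {α : ℝ} (hα0 : 0 ≤ α) (hα1 : α < 1)
    (r θ₀ : ℝ) :
    ∫⁻ θ in Ioc 0 (2 * π), ENNReal.ofReal (‖(r : ℂ) * cexp (θ * I) - cexp (θ₀ * I)‖ ^ (-α))
      ≤ ENNReal.ofReal (∫ u in (0)..(2 * π), |Real.sin u| ^ (-α)) := by
  have hsin_ne : ∀ᵐ θ : ℝ, Real.sin (θ - θ₀) ≠ 0 := by
    refine measure_mono_null (fun θ hθ => ?_)
      ((countable_range fun n : ℤ => n * π + θ₀).measure_zero volume)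
    obtain ⟨n, hn⟩ := Real.sin_eq_zero_iff.1 (not_not.1 hθ)
    exact ⟨n, by linarith⟩
  have hint : IntervalIntegrable (fun θ => |Real.sin (θ - θ₀)| ^ (-α)) volume 0 (2 * π) := by
    convert (intervalIntegrable_abs_sin_rpow_neg hα0 hα1 (-θ₀) (2 * π - θ₀)).comp_sub_right θ₀
      using 1 <;> ring
  have hperiodic : Function.Periodic (fun u => |Real.sin u| ^ (-α)) (2 * π) :=
    Real.sin_periodic.comp fun x => |x| ^ (-α)
  calc ∫⁻ θ in Ioc 0 (2 * π), ENNReal.ofReal (‖(r : ℂ) * cexp (θ * I) - cexp (θ₀ * I)‖ ^ (-α))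
      ≤ ∫⁻ θ in Ioc 0 (2 * π), ENNReal.ofReal (|Real.sin (θ - θ₀)| ^ (-α)) :=
        lintegral_mono_ae <| ae_restrict_of_ae <| hsin_ne.mono fun θ hθ =>
          ENNReal.ofReal_le_ofReal <| Real.rpow_le_rpow_of_nonpos (abs_pos.2 hθ)
            (abs_sin_sub_le_norm_mul_exp_sub_exp r θ θ₀) (by linarith)
    _ = ENNReal.ofReal (∫ θ in (0)..(2 * π), |Real.sin (θ - θ₀)| ^ (-α)) := by
        rw [intervalIntegral.integral_of_le (by positivity), ofReal_integral_eq_lintegral_ofReal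
          ((intervalIntegrable_iff_integrableOn_Ioc_of_le (by positivity)).1 hint)
          (ae_of_all _ fun θ => by positivity)]
    _ = ENNReal.ofReal (∫ u in (0)..(2 * π), |Real.sin u| ^ (-α)) := by
        rw [intervalIntegral.integral_comp_sub_right (fun u => |Real.sin u| ^ (-α)), zero_sub,
          sub_eq_neg_add, hperiodic.intervalIntegral_add_eq (-θ₀) 0, zero_add]

lemma rpow_sum_le_card_rpow_mul_sum_rpow {ι : Type*} (s : Finset ι) {f : ι → ℝ}
    (hf : ∀ i ∈ s, 0 ≤ f i) {β : ℝ} (hβ : 0 < β) :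
    (∑ i ∈ s, f i) ^ β ≤ (s.card : ℝ) ^ β * ∑ i ∈ s, f i ^ β := by
  rcases s.eq_empty_or_nonempty with rfl | hs
  · simp [Real.zero_rpow hβ.ne']
  obtain ⟨i, hi, hmax⟩ := s.exists_max_image f hs
  calc (∑ i ∈ s, f i) ^ β ≤ ((s.card : ℝ) * f i) ^ β := by
        gcongr
        · exact Finset.sum_nonneg hf
        · simpa using Finset.sum_le_card_nsmul s f (f i) hmax
    _ = (s.card : ℝ) ^ β * f i ^ β := Real.mul_rpow (Nat.cast_nonneg _) (hf i hi)
    _ ≤ (s.card : ℝ) ^ β * ∑ i ∈ s, f i ^ β := by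
        gcongr
        exact Finset.single_le_sum (fun j hj => Real.rpow_nonneg (hf j hj) β) hi

lemma iSup_hardyArcIntegral_lt_top_of_norm_le {ι : Type*} (S : Finset ι) (C θ : ι → ℝ)
    (hC : ∀ i, 0 ≤ C i) {f : ℂ → ℂ} {β s : ℝ} (hβ : 0 < β) (hs : 0 ≤ s) (hβs : β * s < 1)
    (hf : ∀ z, ‖z‖ < 1 → ‖f z‖ ≤ ∑ i ∈ S, C i * ‖z - cexp (θ i * I)‖ ^ (-s)) :
    (⨆ r ∈ Ioo (0 : ℝ) 1, hardyArcIntegral f β 0 (2 * π) r) < ⊤ := by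
  set M := ENNReal.ofReal (∫ u in (0)..(2 * π), |Real.sin u| ^ (-(β * s)))
  set K : ι → ℝ≥0∞ := fun i => ENNReal.ofReal ((S.card : ℝ) ^ β * C i ^ β)
  have hKM : ∑ i ∈ S, K i * M < ⊤ :=
    ENNReal.sum_lt_top.2 fun i _ => ENNReal.mul_lt_top ENNReal.ofReal_lt_top ENNReal.ofReal_lt_top
  refine lt_of_le_of_lt (iSup₂_le fun r hr => ?_) hKM
  set d : ι → ℝ → ℝ := fun i θ' => ‖(r : ℂ) * cexp (θ' * I) - cexp (θ i * I)‖
  have hpoint : ∀ θ' : ℝ, ‖f ((r : ℂ) * cexp (θ' * I))‖ ^ β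
      ≤ ∑ i ∈ S, (S.card : ℝ) ^ β * C i ^ β * d i θ' ^ (-(β * s)) := by
    intro θ'
    have hz : ‖(r : ℂ) * cexp (θ' * I)‖ < 1 := by
      rw [norm_mul, norm_exp_ofReal_mul_I, mul_one, norm_real, Real.norm_of_nonneg hr.1.le]
      exact hr.2
    have hnonneg : ∀ i ∈ S, 0 ≤ C i * d i θ' ^ (-s) := fun i _ => by positivity [hC i]
    calc ‖f ((r : ℂ) * cexp (θ' * I))‖ ^ β ≤ (∑ i ∈ S, C i * d i θ' ^ (-s)) ^ β := by
          gcongr; exact hf _ hz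
      _ ≤ (S.card : ℝ) ^ β * ∑ i ∈ S, (C i * d i θ' ^ (-s)) ^ β :=
          rpow_sum_le_card_rpow_mul_sum_rpow S hnonneg hβ
      _ = ∑ i ∈ S, (S.card : ℝ) ^ β * C i ^ β * d i θ' ^ (-(β * s)) := by
          rw [Finset.mul_sum]
          refine Finset.sum_congr rfl fun i _ => ?_
          rw [Real.mul_rpow (hC i) (by positivity), ← Real.rpow_mul (norm_nonneg _), neg_mul,
            mul_comm s β, mul_assoc]
  have hmeas : ∀ i, Measurable fun θ' => ENNReal.ofReal (d i θ' ^ (-(β * s))) := fun i => by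
    fun_prop
  calc hardyArcIntegral f β 0 (2 * π) r
      ≤ ∫⁻ θ' in Ioc 0 (2 * π), ∑ i ∈ S, K i * ENNReal.ofReal (d i θ' ^ (-(β * s))) := by
        refine lintegral_mono fun θ' => (ENNReal.ofReal_le_ofReal (hpoint θ')).trans_eq ?_
        rw [ENNReal.ofReal_sum_of_nonneg fun i _ => by positivity [hC i]]
        refine Finset.sum_congr rfl fun i _ => ENNReal.ofReal_mul (by positivity [hC i])
    _ = ∑ i ∈ S, K i * ∫⁻ θ' in Ioc 0 (2 * π), ENNReal.ofReal (d i θ' ^ (-(β * s))) := by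
        rw [lintegral_finsetSum _ fun i _ => (hmeas i).const_mul _]
        exact Finset.sum_congr rfl fun i _ => lintegral_const_mul _ (hmeas i)
    _ ≤ ∑ i ∈ S, K i * M := by
        gcongr with i
        exact lintegral_rpow_neg_norm_mul_exp_sub_exp_le (by positivity) hβs r (θ i)

lemma eventually_le_norm_sub_mul_norm_add_rpow {g R : ℂ → ℂ} {ζ : ℂ} {A s q : ℝ} (hA : 0 < A)
    (hs : 0 < s) (hq : 0 < q) (hsq : 1 ≤ s * q) (hR : ContinuousAt R ζ)
    (hg : ∀ z, ‖g z‖ = A * ‖z - ζ‖ ^ (-s)) :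
    ∀ᶠ z in 𝓝[≠] ζ, (A / 2) ^ q ≤ ‖z - ζ‖ * ‖g z + R z‖ ^ q := by
  set C := ‖R ζ‖ + 1
  have hdist := tendsto_norm_sub_self_nhdsNE ζ
  have hR_le : ∀ᶠ z in 𝓝[≠] ζ, ‖R z‖ ≤ C :=
    nhdsWithin_le_nhds (hR.norm.eventually (eventually_le_nhds (lt_add_one _)))
  have hg_ge : ∀ᶠ z in 𝓝[≠] ζ, 2 * C ≤ A * ‖z - ζ‖ ^ (-s) :=
    (((tendsto_rpow_neg_nhdsGT_zero (neg_lt_zero.2 hs)).comp hdist).const_mul_atTop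
      hA).eventually_ge_atTop _
  have hdist_le : ∀ᶠ z in 𝓝[≠] ζ, ‖z - ζ‖ ≤ 1 :=
    (hdist.mono_right nhdsWithin_le_nhds).eventually (eventually_le_nhds one_pos)
  have hdist_pos : ∀ᶠ z in 𝓝[≠] ζ, 0 < ‖z - ζ‖ :=
    eventually_mem_nhdsWithin.mono fun z hz => norm_pos_iff.2 (sub_ne_zero.2 hz)
  filter_upwards [hR_le, hg_ge, hdist_le, hdist_pos] with z hRz hgz hd1 hd0
  set d := ‖z - ζ‖
  have hlow : A / 2 * d ^ (-s) ≤ ‖g z + R z‖ := by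
    have := norm_sub_le_norm_add (g z) (R z)
    rw [hg] at this
    linarith
  calc (A / 2) ^ q = d * ((A / 2) ^ q * d ^ (-1 : ℝ)) := by
        rw [Real.rpow_neg_one]; field_simp
    _ ≤ d * ((A / 2) ^ q * d ^ (-(s * q))) := by
        gcongr ?_ * (_ * ?_)
        exact Real.rpow_le_rpow_of_exponent_ge hd0 hd1 (by linarith)
    _ = d * (A / 2 * d ^ (-s)) ^ q := by
        rw [Real.mul_rpow (by positivity) (by positivity), ← Real.rpow_mul hd0.le, neg_mul]
    _ ≤ d * ‖g z + R z‖ ^ q := by gcongr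

lemma lintegral_Ioc_inv_sub (θ₀ : ℝ) {u ε : ℝ} (hu : 0 < u) (huε : u ≤ ε) :
    ∫⁻ θ in Ioc (θ₀ + u) (θ₀ + ε), ENNReal.ofReal ((θ - θ₀)⁻¹)
      = ENNReal.ofReal (Real.log (ε / u)) := by
  have hcont : ContinuousOn (fun θ => (θ - θ₀)⁻¹) (Icc (θ₀ + u) (θ₀ + ε)) :=
    (continuousOn_id.sub continuousOn_const).inv₀ fun θ hθ => by
      simp only [Pi.sub_apply, id]; linarith [hθ.1]
  rw [← ofReal_integral_eq_lintegral_ofReal (hcont.integrableOn_Icc.mono_set Ioc_subset_Icc_self)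
      ((ae_restrict_iff' measurableSet_Ioc).2 (ae_of_all _ fun θ hθ => by
        have := hθ.1; simp only [Pi.zero_apply, inv_nonneg]; linarith)),
    ← intervalIntegral.integral_of_le (by linarith),
    intervalIntegral.integral_comp_sub_right (fun x => x⁻¹), add_sub_cancel_left,
    add_sub_cancel_left, integral_inv_of_pos hu (hu.trans_le huε)]

lemma iSup_Ioo_eq_top_of_ofReal_mul_log_le {F : ℝ → ℝ≥0∞} {c ε : ℝ} (hc : 0 < c) (hε : 0 < ε)
    (hε1 : ε < 1)
    (hF : ∀ u, 0 < u → u ≤ ε → ENNReal.ofReal (c * Real.log (ε / u)) ≤ F (1 - u)) :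
    ⨆ r ∈ Ioo (0 : ℝ) 1, F r = ⊤ := by
  refine ENNReal.eq_top_of_forall_nnreal_le fun x => ?_
  set u := ε * Real.exp (-(x / c))
  have hu : 0 < u := by positivity
  have huε : u ≤ ε :=
    mul_le_of_le_one_right hε.le (Real.exp_le_one_iff.2 (neg_nonpos.2 (by positivity)))
  have hx : (x : ℝ) = c * Real.log (ε / u) := by
    rw [div_mul_cancel_left₀ hε.ne', Real.log_inv, Real.log_exp]; field_simp
  calc (x : ℝ≥0∞) = ENNReal.ofReal (c * Real.log (ε / u)) := by
        rw [← hx, ENNReal.ofReal_coe_nnreal]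
    _ ≤ F (1 - u) := hF u hu huε
    _ ≤ ⨆ r ∈ Ioo (0 : ℝ) 1, F r :=
        le_iSup₂ (f := fun r _ => F r) (1 - u) ⟨by linarith, by linarith⟩

lemma iSup_hardyArcIntegral_eq_top_of_eventually_le {f : ℂ → ℂ} {q a b θ₀ c : ℝ}
    (hθ₀ : θ₀ ∈ Ioo a b) (hc : 0 < c)
    (hf : ∀ᶠ z in 𝓝[≠] cexp (θ₀ * I), ‖z‖ < 1 → c ≤ ‖z - cexp (θ₀ * I)‖ * ‖f z‖ ^ q) :
    (⨆ r ∈ Ioo (0 : ℝ) 1, hardyArcIntegral f q a b r) = ⊤ := by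
  obtain ⟨ρ, hρ, hball⟩ := Metric.mem_nhdsWithin_iff.1 hf
  set ε := min (min (ρ / 4) (b - θ₀)) (1 / 2)
  have hε : 0 < ε := lt_min (lt_min (by positivity) (by linarith [hθ₀.2])) (by norm_num)
  have hερ : ε ≤ ρ / 4 := (min_le_left _ _).trans (min_le_left _ _)
  have hεb : ε ≤ b - θ₀ := (min_le_left _ _).trans (min_le_right _ _)
  have hε1 : ε ≤ 1 / 2 := min_le_right _ _
  have hlower : ∀ u, 0 < u → ∀ θ ∈ Ioc (θ₀ + u) (θ₀ + ε),
      c / 2 * (θ - θ₀)⁻¹ ≤ ‖f (((1 - u : ℝ) : ℂ) * cexp (θ * I))‖ ^ q := by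
    intro u hu θ hθ
    set z := ((1 - u : ℝ) : ℂ) * cexp (θ * I)
    have ht : u < θ - θ₀ := by linarith [hθ.1]
    have ht' : θ - θ₀ ≤ ε := by linarith [hθ.2]
    have hz : ‖z‖ < 1 := by
      rw [norm_mul, norm_exp_ofReal_mul_I, mul_one, norm_real, Real.norm_of_nonneg (by linarith)]
      linarith
    have hdist : ‖z - cexp (θ₀ * I)‖ ≤ 2 * (θ - θ₀) := by
      have := norm_mul_exp_sub_exp_le (r := 1 - u) (by linarith) θ θ₀
      rw [abs_of_pos (by linarith)] at this
      linarith
    have hz_mem : z ∈ Metric.ball (cexp (θ₀ * I)) ρ ∩ {cexp (θ₀ * I)}ᶜ := by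
      refine ⟨?_, fun h => ?_⟩
      · rw [Metric.mem_ball, dist_eq_norm]; linarith
      · rw [mem_singleton_iff.1 h, norm_exp_ofReal_mul_I] at hz; exact lt_irrefl _ hz
    rw [div_mul_eq_mul_div, ← div_eq_mul_inv, div_div, div_le_iff₀ (by linarith)]
    calc c ≤ ‖z - cexp (θ₀ * I)‖ * ‖f z‖ ^ q := hball hz_mem hz
      _ ≤ 2 * (θ - θ₀) * ‖f z‖ ^ q := by gcongr
      _ = _ := by ring
  refine iSup_Ioo_eq_top_of_ofReal_mul_log_le (half_pos hc) hε (by linarith) fun u hu huε => ?_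
  calc ENNReal.ofReal (c / 2 * Real.log (ε / u))
      = ∫⁻ θ in Ioc (θ₀ + u) (θ₀ + ε), ENNReal.ofReal (c / 2 * (θ - θ₀)⁻¹) := by
        simp_rw [ENNReal.ofReal_mul (by positivity : 0 ≤ c / 2)]
        rw [lintegral_const_mul' _ _ ENNReal.ofReal_ne_top, lintegral_Ioc_inv_sub θ₀ hu huε]
    _ ≤ ∫⁻ θ in Ioc (θ₀ + u) (θ₀ + ε),
          ENNReal.ofReal (‖f (((1 - u : ℝ) : ℂ) * cexp (θ * I))‖ ^ q) :=
        setLIntegral_mono' measurableSet_Ioc fun θ hθ =>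
          ENNReal.ofReal_le_ofReal (hlower u hu θ hθ)
    _ ≤ hardyArcIntegral f q a b (1 - u) :=
        lintegral_mono_set (Ioc_subset_Ioc (by linarith [hθ₀.1]) (by linarith))

lemma exists_seq_mem_Ioo_injective_exp_mul_I {a b : ℝ} (hab : a < b) :
    ∃ θ : ℕ → ℝ, (∀ n, θ n ∈ Ioo a b) ∧ Function.Injective fun n => cexp (θ n * I) := by
  set ℓ := min (b - a) (2 * π)
  have hℓ : 0 < ℓ := lt_min (by linarith) (by positivity)
  have hstep : ∀ n : ℕ, 0 < ℓ / (n + 2) ∧ ℓ / (n + 2) < ℓ := fun n =>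
    ⟨by positivity, div_lt_self hℓ (by linarith [n.cast_nonneg (α := ℝ)])⟩
  have hmem : ∀ n : ℕ, a + ℓ / (n + 2) ∈ Ioc a (a + ℓ) := fun n =>
    ⟨by linarith [hstep n], by linarith [hstep n]⟩
  refine ⟨fun n => a + ℓ / (n + 2), fun n => ⟨(hmem n).1, ?_⟩, fun m n h => ?_⟩
  · linarith [hstep n, min_le_left (b - a) (2 * π)]
  · have hcircle := Circle.exp_injOn_Ioc (by linarith [min_le_right (b - a) (2 * π)])
      (hmem m) (hmem n) (Circle.ext (by rw [Circle.coe_exp, Circle.coe_exp]; exact h))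
    rw [add_right_inj, div_eq_div_iff (by positivity) (by positivity), mul_right_inj' hℓ.ne',
      add_left_inj] at hcircle
    exact_mod_cast hcircle.symm

/-- Let `0 < p ≤ q < ∞` and `a < b`. There is a sequence of functions
`g n`, holomorphic on the open unit disc, such that every finite linear combination
`L = λ₀ g 0 + ⋯ + λ_N g N` with `λ_N ≠ 0` belongs to `H^β` for every `0 < β < p` and
does not belong to the localized Hardy space `H^q_{[a,b]}(D)`. -/
theorem lineability_inter_Hbeta_minus_localized_Hq (p q a b : ℝ)
    (hp : 0 < p) (hpq : p ≤ q) (hab : a < b) :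
    ∃ g : ℕ → ℂ → ℂ,
      (∀ n, DifferentiableOn ℂ (g n) (Metric.ball (0 : ℂ) 1)) ∧
      ∀ (N : ℕ) (lam : ℕ → ℂ), lam N ≠ 0 →
        (∀ β : ℝ, 0 < β → β < p →
          (⨆ r ∈ Ioo (0 : ℝ) 1,
              hardyArcIntegral (fun z => ∑ n ∈ Finset.range (N + 1), lam n * g n z)
                β 0 (2 * π) r) < ⊤) ∧
        (⨆ r ∈ Ioo (0 : ℝ) 1,
            hardyArcIntegral (fun z => ∑ n ∈ Finset.range (N + 1), lam n * g n z)
              q a b r) = ⊤ := by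
  obtain ⟨θ, hθ, hinj⟩ := exists_seq_mem_Ioo_injective_exp_mul_I hab
  refine ⟨fun n => boundarySingularity p⁻¹ (θ n), fun n => differentiableOn_boundarySingularity _ _,
    fun N lam hlam => ⟨fun β hβ hβp => ?_, ?_⟩⟩
  · refine iSup_hardyArcIntegral_lt_top_of_norm_le (Finset.range (N + 1)) (fun n => ‖lam n‖) θ
      (fun n => norm_nonneg _) hβ (inv_nonneg.2 hp.le) (by rwa [← div_eq_mul_inv, div_lt_one hp])
      fun z _ => (norm_sum_le _ _).trans (Finset.sum_le_sum fun n _ => ?_)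
    rw [norm_mul, norm_boundarySingularity]
  · have hR : ContinuousAt (fun z => ∑ n ∈ Finset.range N, lam n * boundarySingularity p⁻¹ (θ n) z)
        (cexp (θ N * I)) :=
      tendsto_finsetSum _ fun n hn => continuousAt_const.mul
        (differentiableAt_boundarySingularity _ _ (norm_exp_ofReal_mul_I _).le
          (hinj.ne (ne_of_gt (Finset.mem_range.1 hn)))).continuousAt
    refine iSup_hardyArcIntegral_eq_top_of_eventually_le (hθ N) (c := (‖lam N‖ / 2) ^ q)
      (by positivity) ?_
    simp_rw [Finset.sum_range_succ, add_comm _ (lam N * _)]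
    refine (eventually_le_norm_sub_mul_norm_add_rpow (norm_pos_iff.2 hlam) (inv_pos.2 hp)
      (hp.trans_le hpq) (by rwa [inv_mul_eq_div, one_le_div hp]) hR fun z => ?_).mono
      fun z h _ => h
    rw [norm_mul, norm_boundarySingularity]
end
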